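/- If a Banach space X is an M-ideal in its bidual X** (i.e., ‖x***‖ = ‖π_X x***‖ + ‖x*** − π_X x***‖ for all x*** ∈ X***), then X has property U in X**: every f ∈ X* has a unique norm-preserving extension to X**. -/

import Mathlib

open NormedSpace

/-- Helper instances (as in the older Mathlib's `NormedSpace.Dual`) so that iterated duals elaborate. -/
noncomputable instance instSeminormedAddCommGroupStrongDualReal {X : Type*} [SeminormedAddCommGroup X]
    [NormedSpace ℝ X] : SeminormedAddCommGroup (StrongDual ℝ X) := inferInstance

/-- Helper instance, see above. -/
noncomputable instance instNormedSpaceStrongDualReal {X : Type*} [SeminormedAddCommGroup X]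
    [NormedSpace ℝ X] : NormedSpace ℝ (StrongDual ℝ X) := inferInstance

/-- The adjoint `T* : X* → Y*` of a bounded operator `T : Y → X`. -/
noncomputable def adj {Y X : Type*} [SeminormedAddCommGroup Y] [NormedSpace ℝ Y]
    [SeminormedAddCommGroup X] [NormedSpace ℝ X] (T : Y →L[ℝ] X) :
    StrongDual ℝ X →L[ℝ] StrongDual ℝ Y :=
  LinearMap.mkContinuous
    { toFun := fun f => f.comp T
      map_add' := fun f g => by ext y; simp
      map_smul' := fun c f => by ext y; simp }
    ‖T‖ (fun f => by simpa [mul_comm] using f.opNorm_comp_le T)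

/-- The natural projection `π_X : X*** → X***` onto `X*`. -/
noncomputable def piX (X : Type*) [SeminormedAddCommGroup X] [NormedSpace ℝ X] :
    StrongDual ℝ (StrongDual ℝ (StrongDual ℝ X)) →L[ℝ] StrongDual ℝ (StrongDual ℝ (StrongDual ℝ X)) :=
  (inclusionInDoubleDual ℝ (StrongDual ℝ X)).comp (adj (inclusionInDoubleDual ℝ X))

/-- The triple adjoint `T*** : X*** → Y***` of `T : Y → X`. -/
noncomputable def adj3 {Y X : Type*} [SeminormedAddCommGroup Y] [NormedSpace ℝ Y]
    [SeminormedAddCommGroup X] [NormedSpace ℝ X] (T : Y →L[ℝ] X) :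
    StrongDual ℝ (StrongDual ℝ (StrongDual ℝ X)) →L[ℝ] StrongDual ℝ (StrongDual ℝ (StrongDual ℝ Y)) :=
  adj (adj (adj T))

/-!
The canonical extension `ι f ∈ X***` of `f ∈ X*` preserves the norm. Any extension `F` of `f`
satisfies `π_X F = ι f`; if it also preserves the norm, the `M`-ideal identity reads
`‖f‖ = ‖f‖ + ‖F - ι f‖`, hence `F = ι f`.
-/

section

variable {X : Type*} [SeminormedAddCommGroup X] [NormedSpace ℝ X]

theorem adj_inclusionInDoubleDual_of_extends {F : StrongDual ℝ (StrongDual ℝ (StrongDual ℝ X))}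
    {f : StrongDual ℝ X} (hF : ∀ x : X, F (inclusionInDoubleDual ℝ X x) = f x) :
    adj (inclusionInDoubleDual ℝ X) F = f :=
  ContinuousLinearMap.ext hF

theorem piX_eq_inclusionInDoubleDual_of_extends
    {F : StrongDual ℝ (StrongDual ℝ (StrongDual ℝ X))} {f : StrongDual ℝ X}
    (hF : ∀ x : X, F (inclusionInDoubleDual ℝ X x) = f x) :
    piX X F = inclusionInDoubleDual ℝ (StrongDual ℝ X) f := by
  rw [piX, ContinuousLinearMap.comp_apply, adj_inclusionInDoubleDual_of_extends hF]

-- Proved by hand: `norm_eq_zero` does not see through the `StrongDual` instances declared above.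
theorem StrongDual.eq_of_norm_sub_eq_zero {F G : StrongDual ℝ X} (h : ‖F - G‖ = 0) : F = G := by
  ext x
  have hle := (F - G).le_opNorm x
  rw [h, zero_mul, norm_le_zero_iff] at hle
  exact sub_eq_zero.mp hle

end

theorem M_ideal_in_bidual_implies_property_U_general {X : Type*} [NormedAddCommGroup X]
    [NormedSpace ℝ X]
    (hM : ∀ F : StrongDual ℝ (StrongDual ℝ (StrongDual ℝ X)), ‖F‖ = ‖piX X F‖ + ‖F - piX X F‖) :
    ∀ f : StrongDual ℝ X, ∃! F : StrongDual ℝ (StrongDual ℝ (StrongDual ℝ X)),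
      (∀ x : X, F (inclusionInDoubleDual ℝ X x) = f x) ∧ ‖F‖ = ‖f‖ := by
  intro f
  have hnorm : ‖inclusionInDoubleDual ℝ (StrongDual ℝ X) f‖ = ‖f‖ :=
    (inclusionInDoubleDualLi ℝ).norm_map f
  refine ⟨inclusionInDoubleDual ℝ (StrongDual ℝ X) f, ⟨fun x => rfl, hnorm⟩, ?_⟩
  rintro F ⟨hF, hFnorm⟩
  have hsplit := hM F
  rw [piX_eq_inclusionInDoubleDual_of_extends hF, hnorm, hFnorm, left_eq_add] at hsplit
  exact StrongDual.eq_of_norm_sub_eq_zero hsplit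

/-- If `X` is an `M`-ideal in its bidual, then `X` has property U in `X**`. -/
theorem M_ideal_in_bidual_implies_property_U {X : Type*} [NormedAddCommGroup X]
    [NormedSpace ℝ X] [CompleteSpace X]
    (hM : ∀ F : StrongDual ℝ (StrongDual ℝ (StrongDual ℝ X)), ‖F‖ = ‖piX X F‖ + ‖F - piX X F‖) :
    ∀ f : StrongDual ℝ X, ∃! F : StrongDual ℝ (StrongDual ℝ (StrongDual ℝ X)),
      (∀ x : X, F (inclusionInDoubleDual ℝ X x) = f x) ∧ ‖F‖ = ‖f‖ :=
  M_ideal_in_bidual_implies_property_U_general hM
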